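/- Fix an integer n ≥ 1, let a_1, …, a_n be real numbers and set a_0 = a_{n+1} = 0. Then for all integers 0 ≤ j, j′ ≤ n: Σ_{y=0}^n ψ_j(y)ψ_{j′}(y)·(a_y + a_{y+1}) − Σ_{y=1}^n [ ψ_j(y−1)ψ_{j′}(y) + ψ_j(y)ψ_{j′}(y−1) ]·a_y = γ_j·γ_{j′}·Σ_{y=1}^n φ_j(y)φ_{j′}(y)·a_y. -/

import Mathlib

open Real

noncomputable section

/-- Discrete Neumann eigenfunctions
`ψ_j(x) = ((2 − δ_{0,j})/(n+1))^{1/2} cos(πj(2x+1)/(2(n+1)))`. -/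
def psiN (n j x : ℕ) : ℝ :=
  Real.sqrt ((2 - (if j = 0 then (1:ℝ) else 0)) / ((n : ℝ) + 1))
    * Real.cos (Real.pi * (j : ℝ) * (2 * (x : ℝ) + 1) / (2 * ((n : ℝ) + 1)))

/-- Discrete Dirichlet eigenfunctions `φ_j(x) = (2/(n+1))^{1/2} sin(πjx/(n+1))`. -/
def phiD (n j x : ℕ) : ℝ :=
  Real.sqrt (2 / ((n : ℝ) + 1)) * Real.sin (Real.pi * (j : ℝ) * (x : ℝ) / ((n : ℝ) + 1))

/-- `γ_j = 2 sin(πj/(2(n+1)))`. -/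
def gam (n j : ℕ) : ℝ := 2 * Real.sin (Real.pi * (j : ℝ) / (2 * ((n : ℝ) + 1)))

/-!
The discrete derivative of `ψ_j` is `-γ_j φ_j`: `ψ_j(x+1) - ψ_j(x) = -γ_j φ_j(x+1)` by the
sum-to-product formula for `cos A - cos B`. Once both sides are written as sums against
`a(x+1)`, `x < n` (the boundary values `a_0 = a_{n+1} = 0` make the two halves of the first
sum line up), the left summand is the product of the discrete derivatives of `ψ_j` and `ψ_{j'}`.
-/

theorem Finset.sum_Icc_one_eq_sum_range {M : Type*} [AddCommMonoid M] (f : ℕ → M) (n : ℕ) :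
    ∑ y ∈ Finset.Icc 1 n, f y = ∑ x ∈ Finset.range n, f (x + 1) := by
  rw [← Finset.Ico_add_one_right_eq_Icc, Finset.sum_Ico_eq_sum_range, Nat.add_sub_cancel]
  simp only [add_comm 1]

theorem Finset.sum_range_succ_mul_add_succ_of_eq_zero {R : Type*} [CommSemiring R]
    (b a : ℕ → R) {n : ℕ} (ha0 : a 0 = 0) (han : a (n + 1) = 0) :
    ∑ y ∈ Finset.range (n + 1), b y * (a y + a (y + 1))
      = ∑ x ∈ Finset.range n, (b (x + 1) + b x) * a (x + 1) := by
  simp only [mul_add, add_mul, Finset.sum_add_distrib]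
  rw [Finset.sum_range_succ' (fun y => b y * a y), Finset.sum_range_succ (fun y => b y * a (y + 1)),
    ha0, han]
  ring

theorem psiN_succ_sub (n j x : ℕ) :
    psiN n j (x + 1) - psiN n j x = -gam n j * phiD n j (x + 1) := by
  rcases eq_or_ne j 0 with rfl | hj
  · simp [psiN, gam, phiD]
  have hn : (n : ℝ) + 1 ≠ 0 := by positivity
  have hsum : (π * j * (2 * ((x + 1 : ℕ) : ℝ) + 1) / (2 * (n + 1))
      + π * j * (2 * x + 1) / (2 * (n + 1))) / 2 = π * j * ((x + 1 : ℕ) : ℝ) / (n + 1) := by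
    push_cast; field_simp; ring
  have hdiff : (π * j * (2 * ((x + 1 : ℕ) : ℝ) + 1) / (2 * (n + 1))
      - π * j * (2 * x + 1) / (2 * (n + 1))) / 2 = π * j / (2 * (n + 1)) := by
    push_cast; field_simp; ring
  simp only [psiN, gam, phiD, if_neg hj, sub_zero]
  rw [← mul_sub, Real.cos_sub_cos, hsum, hdiff]
  ring

theorem psi_phi_quadratic_identity_general (n : ℕ) (a : ℕ → ℝ)
    (ha0 : a 0 = 0) (han : a (n + 1) = 0)
    (j j' : ℕ) :
    (∑ y ∈ Finset.range (n + 1), psiN n j y * psiN n j' y * (a y + a (y + 1)))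
      - (∑ y ∈ Finset.Icc 1 n,
          (psiN n j (y - 1) * psiN n j' y + psiN n j y * psiN n j' (y - 1)) * a y)
      = gam n j * gam n j' * ∑ y ∈ Finset.Icc 1 n, phiD n j y * phiD n j' y * a y := by
  rw [Finset.sum_range_succ_mul_add_succ_of_eq_zero (fun y => psiN n j y * psiN n j' y) a ha0 han,
    Finset.sum_Icc_one_eq_sum_range, Finset.sum_Icc_one_eq_sum_range, ← Finset.sum_sub_distrib,
    Finset.mul_sum]
  have product_of_differences (u₀ u₁ v₀ v₁ : ℝ) :
      u₁ * v₁ + u₀ * v₀ - (u₀ * v₁ + u₁ * v₀) = (u₁ - u₀) * (v₁ - v₀) := by ring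
  refine Finset.sum_congr rfl fun x _ => ?_
  rw [Nat.add_sub_cancel, ← sub_mul, product_of_differences, psiN_succ_sub, psiN_succ_sub]
  ring

/-- The discrete identity connecting the Neumann basis `ψ` and the
Dirichlet basis `φ`, for a sequence `a` vanishing at `0` and `n+1`. -/
theorem psi_phi_quadratic_identity (n : ℕ) (hn : 1 ≤ n) (a : ℕ → ℝ)
    (ha0 : a 0 = 0) (han : a (n + 1) = 0)
    (j j' : ℕ) (hj : j ≤ n) (hj' : j' ≤ n) :
    (∑ y ∈ Finset.range (n + 1), psiN n j y * psiN n j' y * (a y + a (y + 1)))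
      - (∑ y ∈ Finset.Icc 1 n,
          (psiN n j (y - 1) * psiN n j' y + psiN n j y * psiN n j' (y - 1)) * a y)
      = gam n j * gam n j' * ∑ y ∈ Finset.Icc 1 n, phiD n j y * phiD n j' y * a y :=
  psi_phi_quadratic_identity_general n a ha0 han j j'
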